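/- Let k ≥ 1 and let X ⊆ D with |X| = k satisfy the invariant that every two distinct points u, u' ∈ X have d(u, u') ≥ max_{v ∈ D} d(v, X). Then max_{v ∈ D} d(v, X) ≤ 2 · min_{K ⊆ D, |K| = k} max_{v ∈ D} d(v, K); that is, X is a 2-approximate solution to the k-center clustering problem. -/
import Mathlib


/-- The distance from a point `v` to its closest point in a (nonempty) finite set `K`,
i.e. `d(v, K) = min_{u ∈ K} d(v, u)`. -/
noncomputable def distToSet {M : Type*} [MetricSpace M] (v : M) (K : Finset M) : ℝ :=
  sInf ((fun u => dist v u) '' (K : Set M))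

lemma distToSet_le {M : Type*} [MetricSpace M] (v : M) {K : Finset M} {u : M}
    (hu : u ∈ K) : distToSet v K ≤ dist v u := by
  apply csInf_le
  · exact (((K : Set M).toFinite.image _)).bddBelow
  · exact ⟨u, hu, rfl⟩

lemma exists_distToSet_eq {M : Type*} [MetricSpace M] (v : M) {K : Finset M}
    (hK : K.Nonempty) : ∃ u ∈ K, distToSet v K = dist v u := by
  have hne : ((fun u => dist v u) '' (K : Set M)).Nonempty :=
    ⟨dist v hK.choose, hK.choose, hK.choose_spec, rfl⟩
  have hfin : ((fun u => dist v u) '' (K : Set M)).Finite := (K : Set M).toFinite.image _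
  have := hne.csInf_mem hfin
  obtain ⟨u, hu, h⟩ := this
  exact ⟨u, hu, h.symm⟩

/-- if the `k` centers `X ⊆ D` are pairwise at distance at least
`max_{v ∈ D} d(v, X)`, then `X` is a 2-approximate solution to the `k`-center problem:
`max_{v ∈ D} d(v, X) ≤ 2 · max_{v ∈ D} d(v, K)` for every size-`k` subset `K ⊆ D`,
i.e. `max_{v ∈ D} d(v, X) ≤ 2 · min_{K ⊆ D, |K| = k} max_{v ∈ D} d(v, K)`. -/
theorem kcenter_two_approx
    {M : Type*} [MetricSpace M]
    (D : Finset M) (hD : D.Nonempty)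
    (k : ℕ) (hk : 1 ≤ k)
    (X : Finset M) (hXD : X ⊆ D) (hXcard : X.card = k)
    (hinv : ∀ u ∈ X, ∀ u' ∈ X, u ≠ u' →
      D.sup' hD (fun v => distToSet v X) ≤ dist u u') :
    ∀ K ⊆ D, K.card = k →
      D.sup' hD (fun v => distToSet v X) ≤ 2 * D.sup' hD (fun v => distToSet v K) := by
  intro K hKD hKcard
  classical
  have hKne : K.Nonempty := Finset.card_pos.mp (by omega)
  have hXne : X.Nonempty := Finset.card_pos.mp (by omega)
  set r := D.sup' hD (fun v => distToSet v X) with hr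
  set r' := D.sup' hD (fun v => distToSet v K) with hr'
  -- r' bounds d(v,K) for v ∈ D
  have hle' : ∀ v ∈ D, distToSet v K ≤ r' :=
    fun v hv => Finset.le_sup' (fun v => distToSet v K) hv
  -- choose nearest center c x ∈ K for each x ∈ X
  have hc : ∀ x ∈ X, ∃ u ∈ K, dist x u ≤ r' := by
    intro x hx
    obtain ⟨u, hu, heq⟩ := exists_distToSet_eq x hKne
    exact ⟨u, hu, by rw [← heq]; exact hle' x (hXD hx)⟩
  choose! c hcK hcle using hc
  by_cases hinj : ∀ x ∈ X, ∀ x' ∈ X, c x = c x' → x = x'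
  · -- c is injective, hence surjective onto K
    have hsurj : ∀ u ∈ K, ∃ x ∈ X, c x = u := by
      have himg : X.image c = K := by
        apply Finset.eq_of_subset_of_card_le
        · intro u hu
          obtain ⟨x, hx, rfl⟩ := Finset.mem_image.mp hu
          exact hcK x hx
        · rw [Finset.card_image_of_injOn (fun a ha b hb => hinj a ha b hb), hXcard, hKcard]
      intro u hu
      rw [← himg] at hu
      exact Finset.mem_image.mp hu
    -- bound the sup pointwise
    apply Finset.sup'_le
    intro v hv
    obtain ⟨u, hu, heq⟩ := exists_distToSet_eq v hKne
    obtain ⟨x, hx, rfl⟩ := hsurj u hu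
    have h1 : dist v (c x) ≤ r' := heq ▸ hle' v hv
    have h2 : dist x (c x) ≤ r' := hcle x hx
    calc distToSet v X ≤ dist v x := distToSet_le v hx
      _ ≤ dist v (c x) + dist (c x) x := dist_triangle _ _ _
      _ ≤ 2 * r' := by rw [dist_comm (c x) x] at *; linarith
  · push_neg at hinj
    obtain ⟨x, hx, x', hx', hcc, hne⟩ := hinj
    have h1 : r ≤ dist x x' := hinv x hx x' hx' hne
    have : dist x x' ≤ dist x (c x) + dist (c x') x' := by
      rw [hcc]; exact dist_triangle _ _ _
    have h2 : dist x x' ≤ 2 * r' := by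
      have := hcle x' hx'
      have h3 : dist (c x') x' ≤ r' := by rw [dist_comm]; exact this
      linarith [hcle x hx]
    linarith
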